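/- For a sequence of k-stretched Kronecker coefficients given by a quasipolynomial (polynomials P_0,…,P_{p-1} with g_k = P_i(k) when k ≡ i mod p) satisfying the superadditivity property g_{k+ℓ} ≥ g_k whenever g_ℓ ≠ 0, all the polynomials P_i that are not identically zero have the same degree. -/

import Mathlib

/-!
On a residue class `r` with `P r ≠ 0` the sequence `g` is eventually nonzero, and every `L`
in the additive monoid generated by `{l ≥ 1 | g l ≠ 0}` satisfies `g k ≤ g (k + L)`. Such an
`L` can be chosen with `L ≡ j - i (mod p)`; then `0 ≤ P i (n) ≤ P j (n + L)` for infinitely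
many `n ≡ i`, which forces `deg P i ≤ deg P j`.
-/

open Polynomial Filter Asymptotics

theorem Polynomial.degree_le_of_frequently_abs_eval_le {P Q : ℝ[X]}
    (h : ∃ᶠ x in atTop, |P.eval x| ≤ |Q.eval x|) : P.degree ≤ Q.degree := by
  by_contra! hlt
  have hP : ∀ᶠ x in atTop, 0 < ‖P.eval x‖ :=
    (eventually_atTop_not_isRoot P (ne_zero_of_degree_gt hlt)).mono fun _ hx => norm_pos_iff.mpr hx
  have hQP := (isLittleO_atTop_of_degree_lt Q P hlt).eventuallyLT_norm_of_eventually_pos hP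
  obtain ⟨x, hle, hlt⟩ := (h.and_eventually hQP).exists
  exact hle.not_gt hlt

theorem le_add_of_mem_closure {g : ℕ → ℕ}
    (hmono : ∀ k l : ℕ, 1 ≤ k → 1 ≤ l → g l ≠ 0 → g k ≤ g (k + l)) {L : ℕ}
    (hL : L ∈ AddSubmonoid.closure {l | 1 ≤ l ∧ g l ≠ 0}) {k : ℕ} (hk : 1 ≤ k) :
    g k ≤ g (k + L) := by
  induction hL using AddSubmonoid.closure_induction generalizing k with
  | mem l hl => exact hmono k l hk hl.1 hl.2
  | zero => rfl
  | add l m _ _ hl hm => exact (hl hk).trans (add_assoc k l m ▸ hm (hk.trans (k.le_add_right l)))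

section Quasipolynomial

variable {p : ℕ} {P : Fin p → ℝ[X]} {g : ℕ → ℕ}

theorem exists_mod_eq_ne_zero
    (hg : ∀ n (r : Fin p), n % p = r → (g n : ℝ) = (P r).eval (n : ℝ))
    {r : Fin p} (hr : P r ≠ 0) : ∃ l, 1 ≤ l ∧ l % p = r ∧ g l ≠ 0 := by
  have hroot : ∀ᶠ n : ℕ in atTop, ¬(P r).IsRoot n :=
    tendsto_natCast_atTop_atTop.eventually (eventually_atTop_not_isRoot _ hr)
  obtain ⟨l, hl, hlroot, hl1⟩ :=
    ((Nat.frequently_mod_eq r.isLt).and_eventually (hroot.and (eventually_ge_atTop 1))).exists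
  refine ⟨l, hl1, hl, fun hgl => hlroot ?_⟩
  rw [IsRoot, ← hg l r hl, hgl, Nat.cast_zero]

theorem degree_le_of_quasipolynomial
    (hg : ∀ n (r : Fin p), n % p = r → (g n : ℝ) = (P r).eval (n : ℝ))
    (hmono : ∀ k l : ℕ, 1 ≤ k → 1 ≤ l → g l ≠ 0 → g k ≤ g (k + l))
    {i j : Fin p} (hi : P i ≠ 0) (hj : P j ≠ 0) : (P i).degree ≤ (P j).degree := by
  obtain ⟨li, hli1, hli, hgli⟩ := exists_mod_eq_ne_zero hg hi
  obtain ⟨lj, hlj1, hlj, hglj⟩ := exists_mod_eq_ne_zero hg hj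
  set L := lj + (p - 1) * li with hL_def
  have hmem {l : ℕ} (hl1 : 1 ≤ l) (hgl : g l ≠ 0) :
      l ∈ AddSubmonoid.closure {l | 1 ≤ l ∧ g l ≠ 0} :=
    AddSubmonoid.subset_closure ⟨hl1, hgl⟩
  have hL : L ∈ AddSubmonoid.closure {l | 1 ≤ l ∧ g l ≠ 0} :=
    add_mem (hmem hlj1 hglj) (smul_eq_mul (p - 1) li ▸ nsmul_mem (hmem hli1 hgli) _)
  have hshift {n : ℕ} (hn : n % p = i) : (n + L) % p = j :=
    calc (n + L) % p = (li + L) % p := Nat.ModEq.add_right L (hn.trans hli.symm)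
      _ = (lj + p * li) % p := by
        have := Nat.le_mul_of_pos_left li i.pos
        rw [hL_def, Nat.sub_one_mul]; congr 1; omega
      _ = j := by rw [Nat.add_mul_mod_self_left, hlj]
  rw [← degree_taylor (P j) (L : ℝ)]
  refine degree_le_of_frequently_abs_eval_le (tendsto_natCast_atTop_atTop.frequently ?_)
  refine ((Nat.frequently_mod_eq i.isLt).and_eventually (eventually_ge_atTop 1)).mono ?_
  rintro n ⟨hn, hn1⟩
  rw [taylor_eval, ← hg n i hn, ← Nat.cast_add, ← hg _ j (hshift hn)]
  simp only [Nat.abs_cast]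
  exact_mod_cast le_add_of_mem_closure hmono hL hn1

end Quasipolynomial

/-- Let `g : ℕ → ℕ` be a quasipolynomial sequence of period `p`, given by real polynomials
`P_0, …, P_{p-1}` via `g k = P_{k mod p}(k)`, and suppose it satisfies the superadditivity
(monotonicity) property: `g (k + ℓ) ≥ g k` whenever `k, ℓ ≥ 1` and `g ℓ ≠ 0`. Then any two of
the polynomials `P_i, P_j` that are not identically zero have the same degree. -/
theorem quasipolynomial_same_degree
    (p : ℕ) (hp : 0 < p) (P : Fin p → Polynomial ℝ) (g : ℕ → ℕ)
    (hg : ∀ k : ℕ, (g k : ℝ) = (P ⟨k % p, Nat.mod_lt k hp⟩).eval (k : ℝ))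
    (hmono : ∀ k l : ℕ, 1 ≤ k → 1 ≤ l → g l ≠ 0 → g k ≤ g (k + l))
    (i j : Fin p) (hi : P i ≠ 0) (hj : P j ≠ 0) :
    (P i).degree = (P j).degree := by
  have hg' (n : ℕ) (r : Fin p) (hn : n % p = r) : (g n : ℝ) = (P r).eval (n : ℝ) := by
    rw [hg n]; exact congrArg (fun r => (P r).eval (n : ℝ)) (Fin.ext hn)
  exact (degree_le_of_quasipolynomial hg' hmono hi hj).antisymm
    (degree_le_of_quasipolynomial hg' hmono hj hi)
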